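/- Let X be a one-dimensional continuous, regular, strong Markov local martingale on E = (a,b) started at ξ. For any y ∈ E with y > ξ and any ε > 0, there exists w ∈ (ξ, y) such that P_w(τ_y ≤ ε) > 0. -/

import Mathlib

open MeasureTheory Set Filter
open scoped NNReal ENNReal

noncomputable section

/-- Canonical path space (renamed to avoid clash). -/
abbrev CPath : Type := ℝ≥0 → ℝ

/-- The canonical filtration on path space, generated by the coordinate maps up to time `t`. -/
def canonicalFiltration : Filtration ℝ≥0 (inferInstance : MeasurableSpace CPath) where
  seq t := ⨆ s ∈ Set.Iic t, MeasurableSpace.comap (fun ω : CPath => ω s) inferInstance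
  mono' := fun s t hst => biSup_mono (fun u hu => le_trans hu hst)
  le' := fun t => iSup₂_le fun s _ => (measurable_pi_apply s).comap_le

/-- Shift operator on path space. -/
def shift (u : ℝ≥0) (ω : CPath) : CPath := fun t => ω (u + t)

/-- The family `P` of laws is strong Markov: for every stopping time `τ`, conditionally on
the pre-`τ` sigma-field, the shifted path has law `P (ω (τ ω))`. -/
def IsStrongMarkovFamily (P : ℝ → Measure CPath) : Prop :=
  ∀ (x : ℝ) (τ : CPath → ℝ≥0) (hτ : IsStoppingTime canonicalFiltration (fun ω => (τ ω : WithTop ℝ≥0)))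
    (A : Set CPath), MeasurableSet A →
    ∀ B : Set CPath, MeasurableSet[hτ.measurableSpace] B →
      P x (B ∩ (fun ω => shift (τ ω) ω) ⁻¹' A) = ∫⁻ ω in B, P (ω (τ ω)) A ∂(P x)

/-- A continuous strong Markov process with state space `E`, given by its family of laws
on canonical path space. -/
structure IsContinuousMarkov (E : Set ℝ) (P : ℝ → Measure CPath) : Prop where
  prob : ∀ x ∈ E, IsProbabilityMeasure (P x)
  start : ∀ x ∈ E, ∀ᵐ ω ∂(P x), ω 0 = x
  cont : ∀ x ∈ E, ∀ᵐ ω ∂(P x), Continuous ω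
  stateSpace : ∀ x ∈ E, ∀ᵐ ω ∂(P x), ∀ t, ω t ∈ E
  strongMarkov : IsStrongMarkovFamily P

/-- A regular continuous strong Markov process: it moreover hits every point of `E`
with positive probability from every starting point in `E`. -/
structure IsRegularDiffusion (E : Set ℝ) (P : ℝ → Measure CPath) extends
    IsContinuousMarkov E P : Prop where
  regular : ∀ x ∈ E, ∀ y ∈ E, 0 < P x {ω : CPath | ∃ t, ω t = y}

/-- `uFn P x y = 1 ⊓ inf {t : P_x(τ_y ≤ t) > 0}`. -/
def uFn (P : ℝ → Measure CPath) (x y : ℝ) : ℝ≥0∞ :=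
  min 1 (sInf {t : ℝ≥0∞ | 0 < P x {ω : CPath | ∃ s : ℝ≥0, (s : ℝ≥0∞) ≤ t ∧ ω s = y}})

/-- `X` is a local martingale for the filtration `F` under `μ`. -/
def IsLocalMart {Ω : Type*} {m : MeasurableSpace Ω} (F : Filtration ℝ≥0 m)
    (μ : Measure Ω) (X : ℝ≥0 → Ω → ℝ) : Prop :=
  ∃ τ : ℕ → Ω → ℝ≥0,
    (∀ n, IsStoppingTime F (fun ω => (τ n ω : WithTop ℝ≥0))) ∧
    (∀ᵐ ω ∂μ, Tendsto (fun n => τ n ω) atTop atTop) ∧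
    ∀ n, Martingale (MeasureTheory.stoppedProcess X (fun ω => (τ n ω : WithTop ℝ≥0))) F μ

/-- `B` is a Brownian motion started at `ξ` under `μ`: continuous paths, Gaussian
increments, independent increments. -/
def IsBM {Ω : Type*} [MeasurableSpace Ω] (μ : Measure Ω) (B : ℝ≥0 → Ω → ℝ) (ξ : ℝ) : Prop :=
  IsProbabilityMeasure μ ∧
  (∀ᵐ ω ∂μ, B 0 ω = ξ ∧ Continuous fun t => B t ω) ∧
  (∀ s t : ℝ≥0, s ≤ t →
    Measure.map (fun ω => B t ω - B s ω) μ = ProbabilityTheory.gaussianReal 0 (t - s)) ∧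
  (∀ (n : ℕ) (t : ℕ → ℝ≥0), Monotone t →
    ProbabilityTheory.iIndepFun
      (fun (i : Fin n) (ω : Ω) => B (t (i.val + 1)) ω - B (t i.val) ω) μ)

end
section Aux

open MeasureTheory Set Filter
open scoped NNReal ENNReal

noncomputable section

namespace HitsFast

instance : Countable ℚ≥0 :=
  Function.Injective.countable (f := fun q : ℚ≥0 => (q : ℚ)) fun _ _ h => NNRat.coe_injective h

/-- Evaluation at time `s` is measurable for `canonicalFiltration t` whenever `s ≤ t`. -/
lemma mem_filtration {s t : ℝ≥0} (hst : s ≤ t) {S : Set ℝ} (hS : MeasurableSet S) :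
    MeasurableSet[canonicalFiltration t] {ω : CPath | ω s ∈ S} := by
  have h : MeasurableSpace.comap (fun ω : CPath => ω s) inferInstance ≤ canonicalFiltration t := by
    exact le_iSup₂ (f := fun (u : ℝ≥0) (_ : u ∈ Set.Iic t) =>
      MeasurableSpace.comap (fun ω : CPath => ω u) inferInstance) s hst
  exact h _ ⟨S, hS, rfl⟩

lemma shift_apply (u : ℝ≥0) (ω : CPath) (t : ℝ≥0) : shift u ω t = ω (u + t) := rfl

lemma shift_zero (ω : CPath) : shift 0 ω = ω := by
  funext t; simp [shift]

lemma continuous_shift {ω : CPath} (h : Continuous ω) (u : ℝ≥0) : Continuous (shift u ω) := by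
  have : Continuous fun t : ℝ≥0 => u + t := continuous_const.add continuous_id
  exact h.comp this

end HitsFast

end

end Aux
section Aux2
open MeasureTheory Set Filter
open scoped NNReal ENNReal
noncomputable section
namespace HitsFast

/-- grid time -/
def gridT (e : ℝ≥0) (k j : ℕ) : ℝ≥0 := min ((k : ℝ≥0) * e / ((j : ℝ≥0) + 1)) e

lemma gridT_le (e : ℝ≥0) (k j : ℕ) : gridT e k j ≤ e := min_le_right _ _

/-- Measurable proxy for the event "the path reaches `y` by time `e`". -/
def Dset (y : ℝ) (e : ℝ≥0) : Set CPath :=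
  {ω | ∀ n : ℕ, ∃ k j : ℕ, y - 1/(n+1) < ω (gridT e k j)}

lemma measurableSet_Dset (y : ℝ) (e : ℝ≥0) : MeasurableSet (Dset y e) := by
  have : Dset y e = ⋂ n : ℕ, ⋃ k : ℕ, ⋃ j : ℕ,
      {ω : CPath | y - 1/(n+1) < ω (gridT e k j)} := by
    ext ω; simp [Dset]
  rw [this]
  exact MeasurableSet.iInter fun n => MeasurableSet.iUnion fun k => MeasurableSet.iUnion fun j =>
    measurableSet_lt measurable_const (measurable_pi_apply _)

lemma D_of_hit {ω : CPath} {y : ℝ} {e : ℝ≥0} (he : 0 < e) (hc : Continuous ω)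
    (t : ℝ≥0) (hte : t ≤ e) (hty : ω t = y) : ω ∈ Dset y e := by
  intro n
  have hn : (0:ℝ) < 1/(n+1) := by positivity
  obtain ⟨δ, hδ, hball⟩ := Metric.continuousAt_iff.1 (hc.continuousAt (x := t))
    (1/(n+1)) hn
  obtain ⟨j, hj⟩ := exists_nat_gt ((e : ℝ) / δ)
  have hj1 : (e : ℝ) / ((j:ℝ) + 1) < δ := by
    rw [div_lt_iff₀ (by positivity)]
    rw [div_lt_iff₀ hδ] at hj
    nlinarith [e.coe_nonneg, hδ]
  set k := ⌈(t * ((j:ℝ≥0) + 1) / e : ℝ≥0)⌉₊ with hk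
  have hjne : ((j:ℝ≥0) + 1) ≠ 0 := by positivity
  have hene : (e : ℝ≥0) ≠ 0 := ne_of_gt he
  have h1 : t ≤ (k : ℝ≥0) * e / ((j:ℝ≥0) + 1) := by
    have := Nat.le_ceil (t * ((j:ℝ≥0) + 1) / e)
    calc t = t * ((j:ℝ≥0) + 1) / e * e / ((j:ℝ≥0)+1) := by
              field_simp
         _ ≤ (k : ℝ≥0) * e / ((j:ℝ≥0) + 1) := by
              gcongr
  have h2 : (k : ℝ≥0) * e / ((j:ℝ≥0) + 1) ≤ t + e / ((j:ℝ≥0)+1) := by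
    have hceil : (k : ℝ≥0) ≤ t * ((j:ℝ≥0) + 1) / e + 1 :=
      le_of_lt (Nat.ceil_lt_add_one zero_le)
    calc (k : ℝ≥0) * e / ((j:ℝ≥0) + 1) ≤ (t * ((j:ℝ≥0) + 1) / e + 1) * e / ((j:ℝ≥0)+1) := by
          gcongr
      _ = t + e / ((j:ℝ≥0)+1) := by
          rw [add_mul, div_mul_cancel₀ _ hene, add_div, mul_div_assoc,
            div_self hjne, mul_one, one_mul]
  set s := gridT e k j with hs
  have hts : t ≤ s := le_min h1 hte
  have hs2 : s ≤ t + e / ((j:ℝ≥0)+1) := le_trans (min_le_left _ _) h2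
  have hdist : dist s t < δ := by
    rw [NNReal.dist_eq, abs_of_nonneg (sub_nonneg.2 (NNReal.coe_le_coe.2 hts))]
    have := (NNReal.coe_le_coe.2 hs2)
    push_cast at this
    have hj1' : (e:ℝ) / ((j:ℝ)+1) < δ := hj1
    push_cast
    linarith
  have := hball hdist
  rw [hty, Real.dist_eq] at this
  have := (abs_lt.1 this).1
  exact ⟨k, j, by linarith⟩

lemma hit_of_D {ω : CPath} {y : ℝ} {e : ℝ≥0} (hc : Continuous ω)
    (h0 : ω 0 < y) (hD : ω ∈ Dset y e) : ∃ t : ℝ≥0, t ≤ e ∧ ω t = y := by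
  obtain ⟨t₀, ht₀mem, ht₀max⟩ := IsCompact.exists_isMaxOn (isCompact_Icc (a := (0:ℝ≥0)) (b := e))
    ⟨0, by simp⟩ hc.continuousOn
  have hy : y ≤ ω t₀ := by
    by_contra hlt
    push_neg at hlt
    obtain ⟨n, hn⟩ := exists_nat_one_div_lt (sub_pos.2 hlt)
    obtain ⟨k, j, hkj⟩ := hD n
    have hmem : gridT e k j ∈ Icc (0:ℝ≥0) e := ⟨zero_le, gridT_le e k j⟩
    have h2 : ω (gridT e k j) ≤ ω t₀ := ht₀max hmem
    linarith
  have hIcc : y ∈ Icc (ω 0) (ω t₀) := ⟨le_of_lt h0, hy⟩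
  have := intermediate_value_Icc (ht₀mem.1) (hc.continuousOn (s := Icc 0 t₀))
  obtain ⟨t, htmem, hty⟩ := this hIcc
  exact ⟨t, le_trans htmem.2 ht₀mem.2, hty⟩

end HitsFast
end
end Aux2
section Aux3
open MeasureTheory Set Filter
open scoped NNReal ENNReal
noncomputable section
namespace HitsFast

/-- grid point `i/(m+1)`. -/
def gp (m i : ℕ) : ℝ≥0 := (i : ℝ≥0) / ((m : ℝ≥0) + 1)

lemma gp_mono (m : ℕ) : Monotone (gp m) := fun i i' h => by
  unfold gp
  gcongr <;> exact_mod_cast h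

/-- detection set: grid indices (up to `J`) where the path is in `(p,q)`. -/
def Det (p q : ℝ) (m J : ℕ) (ω : CPath) : Set ℕ := {i | i ≤ J ∧ ω (gp m i) ∈ Set.Ioo p q}

open Classical in
/-- first grid time where the path is detected in `(p,q)`, capped. -/
def sigmaT (p q : ℝ) (m J : ℕ) (ω : CPath) : ℝ≥0 :=
  if h : (Det p q m J ω).Nonempty then gp m (sInf (Det p q m J ω)) else gp m (J+1)

lemma sigmaT_le_cap (p q : ℝ) (m J : ℕ) (ω : CPath) : sigmaT p q m J ω ≤ gp m (J+1) := by
  unfold sigmaT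
  split_ifs with h
  · exact gp_mono m (le_trans (Nat.sInf_mem h).1 (Nat.le_succ J))
  · exact le_refl _

lemma sigmaT_spec {p q : ℝ} {m J : ℕ} {ω : CPath} {i : ℕ} (hi : i ∈ Det p q m J ω) :
    sigmaT p q m J ω ≤ gp m i ∧ ω (sigmaT p q m J ω) ∈ Set.Ioo p q := by
  have hne : (Det p q m J ω).Nonempty := ⟨i, hi⟩
  unfold sigmaT
  rw [dif_pos hne]
  exact ⟨gp_mono m (Nat.sInf_le hi), (Nat.sInf_mem hne).2⟩

lemma sigmaT_nonempty_of_lt_cap {p q : ℝ} {m J : ℕ} {ω : CPath} {t : ℝ≥0}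
    (ht : t < gp m (J+1)) (hσ : sigmaT p q m J ω ≤ t) : (Det p q m J ω).Nonempty := by
  by_contra h
  unfold sigmaT at hσ
  rw [dif_neg h] at hσ
  exact absurd (le_trans hσ (le_of_lt ht)) (lt_irrefl _ (lt_of_le_of_lt hσ ht)).elim

/-- the event that detection occurs. -/
def BmSet (p q : ℝ) (m J : ℕ) : Set CPath := {ω | (Det p q m J ω).Nonempty}

lemma BmSet_eq (p q : ℝ) (m J : ℕ) :
    BmSet p q m J = ⋃ (i : ℕ) (_ : i ≤ J), {ω : CPath | ω (gp m i) ∈ Set.Ioo p q} := by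
  ext ω
  simp only [BmSet, Set.Nonempty, Det, mem_setOf_eq, mem_iUnion, exists_prop] <;> tauto

lemma measurableSet_BmSet (p q : ℝ) (m J : ℕ) : MeasurableSet (BmSet p q m J) := by
  rw [BmSet_eq]
  exact MeasurableSet.iUnion fun i => MeasurableSet.iUnion fun _ =>
    (measurable_pi_apply _) measurableSet_Ioo

lemma measurableSet_BmSet_filtration (p q : ℝ) (m J : ℕ) {t : ℝ≥0} (ht : gp m (J+1) ≤ t) :
    MeasurableSet[canonicalFiltration t] (BmSet p q m J) := by
  rw [BmSet_eq]
  refine MeasurableSet.iUnion fun i => MeasurableSet.iUnion fun hi => ?_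
  exact mem_filtration (le_trans (gp_mono m (le_trans hi (Nat.le_succ J))) ht) measurableSet_Ioo

/-- the set of paths whose first detection index is exactly `i`. -/
def Ei (p q : ℝ) (m : ℕ) (i : ℕ) : Set CPath :=
  {ω | ω (gp m i) ∈ Set.Ioo p q} ∩ ⋂ (i' : ℕ) (_ : i' < i), {ω : CPath | ω (gp m i') ∉ Set.Ioo p q}

lemma measurableSet_Ei_filtration (p q : ℝ) (m i : ℕ) {t : ℝ≥0} (ht : gp m i ≤ t) :
    MeasurableSet[canonicalFiltration t] (Ei p q m i) := by
  refine MeasurableSet.inter (mem_filtration ht measurableSet_Ioo) ?_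
  refine MeasurableSet.iInter fun i' => MeasurableSet.iInter fun hi' => ?_
  exact (mem_filtration (le_trans (gp_mono m (le_of_lt hi')) ht) measurableSet_Ioo).compl

lemma sigmaT_le_iff {p q : ℝ} {m J : ℕ} {t : ℝ≥0} (ht : t < gp m (J+1)) (ω : CPath) :
    sigmaT p q m J ω ≤ t ↔ ∃ i, i ≤ J ∧ gp m i ≤ t ∧ ω ∈ Ei p q m i := by
  constructor
  · intro hσ
    have hne := sigmaT_nonempty_of_lt_cap ht hσ
    have hmem := Nat.sInf_mem hne
    refine ⟨sInf (Det p q m J ω), hmem.1, ?_, hmem.2, ?_⟩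
    · have : sigmaT p q m J ω = gp m (sInf (Det p q m J ω)) := by
        unfold sigmaT; rw [dif_pos hne]
      rwa [this] at hσ
    · simp only [mem_iInter, mem_setOf_eq]
      intro i' hi' hcon
      have : i' ∈ Det p q m J ω := ⟨le_trans (le_of_lt hi') hmem.1, hcon⟩
      exact absurd (Nat.sInf_le this) (not_le.2 hi')
  · rintro ⟨i, hiJ, hit, hEi, hmin⟩
    have hidet : i ∈ Det p q m J ω := ⟨hiJ, hEi⟩
    have hne : (Det p q m J ω).Nonempty := ⟨i, hidet⟩
    have hinf : sInf (Det p q m J ω) = i := by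
      refine le_antisymm (Nat.sInf_le hidet) ?_
      by_contra hcon
      push_neg at hcon
      have hmem := Nat.sInf_mem hne
      have := hmin
      simp only [mem_iInter, mem_setOf_eq] at this
      exact this _ hcon hmem.2
    have : sigmaT p q m J ω = gp m i := by
      unfold sigmaT; rw [dif_pos hne, hinf]
    rw [this]; exact hit

lemma isStoppingTime_sigmaT (p q : ℝ) (m J : ℕ) :
    IsStoppingTime canonicalFiltration (fun ω => (sigmaT p q m J ω : WithTop ℝ≥0)) := by
  intro t
  simp only [WithTop.coe_le_coe]
  by_cases hcap : gp m (J+1) ≤ t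
  · have : {ω : CPath | sigmaT p q m J ω ≤ t} = Set.univ := by
      ext ω
      simp only [mem_setOf_eq, mem_univ, iff_true]
      exact le_trans (sigmaT_le_cap p q m J ω) hcap
    rw [this]
    exact MeasurableSet.univ
  · push_neg at hcap
    have : {ω : CPath | sigmaT p q m J ω ≤ t}
        = ⋃ (i : ℕ) (_ : i ≤ J) (_ : gp m i ≤ t), Ei p q m i := by
      ext ω
      simp only [mem_setOf_eq, mem_iUnion, exists_prop]
      rw [sigmaT_le_iff hcap] <;> tauto
    rw [this]
    exact MeasurableSet.iUnion fun i => MeasurableSet.iUnion fun _ =>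
      MeasurableSet.iUnion fun hit => measurableSet_Ei_filtration p q m i hit

lemma BmSet_mem_measurableSpace (p q : ℝ) (m J : ℕ) :
    MeasurableSet[(isStoppingTime_sigmaT p q m J).measurableSpace] (BmSet p q m J) := by
  rw [IsStoppingTime.measurableSpace]
  show _ ∧ ∀ t : ℝ≥0, _
  refine ⟨le_iSup (fun t => (canonicalFiltration : ℝ≥0 → MeasurableSpace CPath) t) (gp m (J+1)) _
    (measurableSet_BmSet_filtration p q m J le_rfl), fun t => ?_⟩
  simp only [WithTop.coe_le_coe]
  by_cases hcap : gp m (J+1) ≤ t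
  · have h1 : {ω : CPath | sigmaT p q m J ω ≤ t} = Set.univ := by
      ext ω
      simp only [mem_setOf_eq, mem_univ, iff_true]
      exact le_trans (sigmaT_le_cap p q m J ω) hcap
    rw [h1, Set.inter_univ]
    exact measurableSet_BmSet_filtration p q m J hcap
  · push_neg at hcap
    have h1 : BmSet p q m J ∩ {ω : CPath | sigmaT p q m J ω ≤ t}
        = {ω : CPath | sigmaT p q m J ω ≤ t} := by
      apply Set.inter_eq_self_of_subset_right
      intro ω hω
      exact sigmaT_nonempty_of_lt_cap hcap hω
    rw [h1]
    simpa only [WithTop.coe_le_coe] using isStoppingTime_sigmaT p q m J t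

end HitsFast
end
end Aux3
section Aux4
open MeasureTheory Set Filter
open scoped NNReal ENNReal
noncomputable section
namespace HitsFast

lemma exists_pos_of_setLIntegral_pos {μ : Measure CPath} {B : Set CPath} (hB : MeasurableSet B)
    {f : CPath → ℝ≥0∞} (h : 0 < ∫⁻ ω in B, f ω ∂μ) : ∃ ω ∈ B, 0 < f ω := by
  by_contra hcon
  push_neg at hcon
  have hle : ∀ ω, f ω ≤ Set.indicator Bᶜ (fun _ => (⊤:ℝ≥0∞)) ω := by
    intro ω
    by_cases hω : ω ∈ B
    · have := hcon ω hω
      simp only [le_zero_iff] at this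
      simp [this]
    · simp [Set.indicator_of_mem (Set.mem_compl hω)]
  have h2 : ∫⁻ ω in B, f ω ∂μ ≤ ∫⁻ ω in B, Set.indicator Bᶜ (fun _ => (⊤:ℝ≥0∞)) ω ∂μ :=
    lintegral_mono hle
  rw [lintegral_indicator hB.compl, setLIntegral_const] at h2
  have hr : (μ.restrict B) Bᶜ = 0 := by
    rw [Measure.restrict_apply hB.compl]
    simp
  rw [hr, mul_zero] at h2
  exact absurd (le_antisymm h2 zero_le) (ne_of_gt h)

lemma crossing (a b ξ y : ℝ) (P : ℝ → Measure CPath)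
    (hX : IsRegularDiffusion (Set.Ioo a b) P)
    (hξ : ξ ∈ Set.Ioo a b) (hy : y ∈ Set.Ioo a b) (hξy : ξ < y)
    (e : ℝ≥0) (he : 0 < e) (z : ℝ) (hza : a < z) (hzy : z < y)
    (hpos : 0 < P z (Dset y e)) :
    ∃ w ∈ Set.Ioo ξ y, 0 < P w (Dset y e) := by
  classical
  set p := (max z ξ + y)/2 with hp
  set q := (p + y)/2 with hq
  set mid := (p + q)/2 with hmid
  have hmaxy : max z ξ < y := max_lt hzy hξy
  have hξp : ξ < p := lt_of_le_of_lt (le_max_right z ξ) (by rw [hp]; linarith)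
  have hzp : z < p := lt_of_le_of_lt (le_max_left z ξ) (by rw [hp]; linarith)
  have hpy : p < y := by rw [hp]; linarith
  have hpq : p < q := by rw [hq]; linarith
  have hqy : q < y := by rw [hq]; linarith
  have hpmid : p < mid := by rw [hmid]; linarith
  have hmidq : mid < q := by rw [hmid]; linarith
  have hz : z ∈ Set.Ioo a b := ⟨hza, lt_trans hzy hy.2⟩
  -- a.e. good set
  have hGae : ∀ᵐ ω ∂(P z), ω 0 = z ∧ Continuous ω :=
    (hX.start z hz).and (hX.cont z hz)
  have hGnull : P z {ω : CPath | ¬ (ω 0 = z ∧ Continuous ω)} = 0 := ae_iff.mp hGae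
  set Gset : Set CPath := {ω | ω 0 = z ∧ Continuous ω} with hGset
  set J : ℕ → ℕ := fun m => ⌈(e * ((m:ℝ≥0)+1) : ℝ≥0)⌉₊ with hJ
  -- pathwise covering
  have hcover : Dset y e ∩ Gset ⊆ ⋃ m : ℕ, (BmSet p q m (J m) ∩
      (fun ω => shift (sigmaT p q m (J m) ω) ω) ⁻¹' (Dset y e)) := by
    rintro ω ⟨hD, h0, hc⟩
    obtain ⟨tstar, htse, htsy⟩ := hit_of_D hc (by rw [h0]; exact hzy) hD
    -- find crossing time of `mid`
    have hmidIcc : mid ∈ Set.Icc (ω 0) (ω tstar) := by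
      constructor
      · rw [h0]; linarith
      · rw [htsy]; linarith
    obtain ⟨t₁, ht₁mem, ht₁⟩ := intermediate_value_Icc (zero_le : (0:ℝ≥0) ≤ tstar) hc.continuousOn hmidIcc
    have ht₁lt : t₁ < tstar := by
      rcases lt_or_eq_of_le ht₁mem.2 with h | h
      · exact h
      · exfalso; rw [h, htsy] at ht₁; linarith
    -- continuity at t₁
    have hU : IsOpen (ω ⁻¹' Set.Ioo p q) := isOpen_Ioo.preimage hc
    have ht₁U : t₁ ∈ ω ⁻¹' Set.Ioo p q := by
      simp only [Set.mem_preimage, ht₁]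
      exact ⟨hpmid, hmidq⟩
    obtain ⟨δ, hδpos, hball⟩ := Metric.isOpen_iff.1 hU t₁ ht₁U
    have htdiff : (0:ℝ) < (tstar:ℝ) - (t₁:ℝ) := by
      have := NNReal.coe_lt_coe.2 ht₁lt
      linarith
    obtain ⟨m, hm⟩ := exists_nat_one_div_lt (lt_min_iff.2 ⟨hδpos, htdiff⟩ : (0:ℝ) < min δ ((tstar:ℝ) - t₁))
    have hmδ : 1/((m:ℝ)+1) < δ := lt_of_lt_of_le hm (min_le_left _ _)
    have hmt : 1/((m:ℝ)+1) < (tstar:ℝ) - t₁ := lt_of_lt_of_le hm (min_le_right _ _)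
    set k := ⌈(t₁ * ((m:ℝ≥0)+1) : ℝ≥0)⌉₊ with hk
    have hmne : ((m:ℝ≥0) + 1) ≠ 0 := by positivity
    have hc1 : t₁ ≤ gp m k := by
      have h1 := Nat.le_ceil (t₁ * ((m:ℝ≥0)+1))
      unfold gp
      rw [le_div_iff₀ (by positivity)]
      exact h1
    have hc2 : gp m k ≤ t₁ + 1/((m:ℝ≥0)+1) := by
      have h1 : (k:ℝ≥0) ≤ t₁ * ((m:ℝ≥0)+1) + 1 := le_of_lt (Nat.ceil_lt_add_one zero_le)
      unfold gp
      rw [div_le_iff₀ (by positivity), add_mul, div_mul_cancel₀ _ hmne]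
      exact h1
    have hc3 : k ≤ J m := by
      rw [hk, hJ]
      exact Nat.ceil_le_ceil (by gcongr; exact le_trans (le_of_lt ht₁lt) htse)
    have hdist : dist (gp m k) t₁ < δ := by
      rw [NNReal.dist_eq, abs_of_nonneg (sub_nonneg.2 (NNReal.coe_le_coe.2 hc1))]
      have h2 := NNReal.coe_le_coe.2 hc2
      push_cast at h2
      linarith
    have hval : ω (gp m k) ∈ Set.Ioo p q := hball (Metric.mem_ball.2 hdist)
    have hdet : k ∈ Det p q m (J m) ω := ⟨hc3, hval⟩
    obtain ⟨hσle, hσval⟩ := sigmaT_spec hdet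
    have hσts : sigmaT p q m (J m) ω < tstar := by
      rw [← NNReal.coe_lt_coe]
      have h1 := NNReal.coe_le_coe.2 hσle
      have h2 := NNReal.coe_le_coe.2 hc2
      push_cast at h1 h2
      linarith
    refine Set.mem_iUnion.2 ⟨m, ⟨⟨k, hdet⟩, ?_⟩⟩
    -- the shifted path reaches y by time e
    have : shift (sigmaT p q m (J m) ω) ω ∈ Dset y e := by
      refine D_of_hit he (continuous_shift hc _) (tstar - sigmaT p q m (J m) ω)
        (le_trans tsub_le_self htse) ?_
      rw [shift_apply, add_tsub_cancel_of_le (le_of_lt hσts), htsy]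
    exact this
  -- measure positivity propagates
  have hpos2 : 0 < P z (Dset y e ∩ Gset) := by
    by_contra hcon
    push_neg at hcon
    have h0 : P z (Dset y e ∩ Gset) = 0 := le_antisymm hcon zero_le
    have : P z (Dset y e) ≤ P z (Dset y e ∩ Gset) + P z {ω : CPath | ¬ (ω 0 = z ∧ Continuous ω)} := by
      refine le_trans (measure_mono ?_) (measure_union_le _ _)
      intro ω hω
      by_cases hG : ω ∈ Gset
      · exact Or.inl ⟨hω, hG⟩
      · exact Or.inr hG
    rw [h0, hGnull, add_zero] at this
    exact absurd (le_antisymm this zero_le) (ne_of_gt hpos)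
  have hsum : 0 < ∑' m : ℕ, P z (BmSet p q m (J m) ∩
      (fun ω => shift (sigmaT p q m (J m) ω) ω) ⁻¹' (Dset y e)) := by
    refine lt_of_lt_of_le hpos2 (le_trans (measure_mono hcover) (measure_iUnion_le _))
  obtain ⟨m, hmpos⟩ : ∃ m : ℕ, 0 < P z (BmSet p q m (J m) ∩
      (fun ω => shift (sigmaT p q m (J m) ω) ω) ⁻¹' (Dset y e)) := by
    by_contra hcon
    push_neg at hcon
    have : ∀ m : ℕ, P z (BmSet p q m (J m) ∩
        (fun ω => shift (sigmaT p q m (J m) ω) ω) ⁻¹' (Dset y e)) = 0 :=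
      fun m => le_antisymm (hcon m) zero_le
    rw [ENNReal.tsum_eq_zero.2 this] at hsum
    exact lt_irrefl _ hsum
  -- strong Markov
  have hsm := hX.strongMarkov z (sigmaT p q m (J m)) (isStoppingTime_sigmaT p q m (J m))
    (Dset y e) (measurableSet_Dset y e) (BmSet p q m (J m))
    (BmSet_mem_measurableSpace p q m (J m))
  rw [hsm] at hmpos
  obtain ⟨ω₀, hω₀B, hω₀pos⟩ := exists_pos_of_setLIntegral_pos (measurableSet_BmSet p q m (J m)) hmpos
  obtain ⟨i, hi⟩ := hω₀B
  obtain ⟨_, hσval⟩ := sigmaT_spec hi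
  refine ⟨ω₀ (sigmaT p q m (J m) ω₀), ⟨lt_trans hξp hσval.1, lt_trans hσval.2 hqy⟩, hω₀pos⟩

end HitsFast
end
end Aux4
section Aux5
open MeasureTheory Set Filter
open scoped NNReal ENNReal
noncomputable section
namespace HitsFast

lemma localize (a b ξ y : ℝ) (P : ℝ → Measure CPath)
    (hX : IsRegularDiffusion (Set.Ioo a b) P)
    (hξ : ξ ∈ Set.Ioo a b) (hy : y ∈ Set.Ioo a b) (hξy : ξ < y)
    (e : ℝ≥0) (he : 0 < e)
    (hreg : 0 < P ξ {ω : CPath | ∃ t, ω t = y}) :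
    ∃ z, a < z ∧ z < y ∧ 0 < P z (Dset y e) := by
  classical
  set Aset : Set CPath := {ω | ∃ t : ℝ≥0, t ≤ e ∧ ω t = y} with hAset
  set W : ℕ → Set CPath := fun k => (fun ω => shift ((k:ℝ≥0)*e) ω) ⁻¹' Aset with hW
  have hene : (e:ℝ≥0) ≠ 0 := ne_of_gt he
  -- covering of the hitting event by the windows
  have hcov : {ω : CPath | ∃ t, ω t = y} ⊆ ⋃ k : ℕ, W k := by
    rintro ω ⟨t, ht⟩
    refine Set.mem_iUnion.2 ⟨⌊(t / e : ℝ≥0)⌋₊, ?_⟩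
    have hfl : (⌊(t / e : ℝ≥0)⌋₊ : ℝ≥0) * e ≤ t := by
      have h1 := Nat.floor_le (zero_le : (0:ℝ≥0) ≤ t / e)
      calc (⌊(t / e : ℝ≥0)⌋₊ : ℝ≥0) * e ≤ t / e * e := by gcongr
        _ = t := div_mul_cancel₀ _ hene
    have hlt : t ≤ (⌊(t / e : ℝ≥0)⌋₊ : ℝ≥0) * e + e := by
      have h1 := le_of_lt (Nat.lt_floor_add_one (t / e))
      calc t = t / e * e := (div_mul_cancel₀ _ hene).symm
        _ ≤ ((⌊(t / e : ℝ≥0)⌋₊ : ℝ≥0) + 1) * e := by gcongr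
        _ = (⌊(t / e : ℝ≥0)⌋₊ : ℝ≥0) * e + e := by ring
    refine ⟨t - (⌊(t / e : ℝ≥0)⌋₊ : ℝ≥0) * e, tsub_le_iff_left.2 hlt, ?_⟩
    show shift ((⌊(t / e : ℝ≥0)⌋₊ : ℝ≥0) * e) ω (t - (⌊(t / e : ℝ≥0)⌋₊ : ℝ≥0) * e) = y
    rw [shift_apply, add_tsub_cancel_of_le hfl, ht]
  -- a positive window exists
  have hKne : {k : ℕ | 0 < P ξ (W k)}.Nonempty := by
    by_contra hcon
    rw [Set.not_nonempty_iff_eq_empty] at hcon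
    have hz : ∀ k : ℕ, P ξ (W k) = 0 := by
      intro k
      by_contra hk
      have : k ∈ {k : ℕ | 0 < P ξ (W k)} := lt_of_le_of_ne zero_le (Ne.symm hk)
      rw [hcon] at this
      exact this
    have := le_trans (measure_mono hcov) (measure_iUnion_le (μ := P ξ) W)
    rw [ENNReal.tsum_eq_zero.2 hz] at this
    exact absurd (le_antisymm this zero_le) (ne_of_gt hreg)
  set kstar := sInf {k : ℕ | 0 < P ξ (W k)} with hkstar
  have hkpos : 0 < P ξ (W kstar) := Nat.sInf_mem hKne
  have hkmin : ∀ k < kstar, P ξ (W k) = 0 := by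
    intro k hk
    have := Nat.notMem_of_lt_sInf hk
    simp only [mem_setOf_eq, not_lt] at this
    exact le_antisymm this zero_le
  -- good set at ξ
  have hGae : ∀ᵐ ω ∂(P ξ), ω 0 = ξ ∧ Continuous ω ∧ ∀ t, ω t ∈ Set.Ioo a b :=
    (hX.start ξ hξ).and ((hX.cont ξ hξ).and (hX.stateSpace ξ hξ))
  have hGnull : P ξ {ω : CPath | ¬ (ω 0 = ξ ∧ Continuous ω ∧ ∀ t, ω t ∈ Set.Ioo a b)} = 0 :=
    ae_iff.mp hGae
  set Gset : Set CPath := {ω | ω 0 = ξ ∧ Continuous ω ∧ ∀ t, ω t ∈ Set.Ioo a b} with hGset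
  rcases Nat.eq_zero_or_pos kstar with hk0 | hkpos'
  · -- the path hits y within time e already from ξ
    refine ⟨ξ, hξ.1, hξy, ?_⟩
    have hW0 : W kstar = Aset := by
      rw [hk0]
      ext ω
      simp only [hW, Set.mem_preimage, Nat.cast_zero, zero_mul, shift_zero]
    rw [hW0] at hkpos
    have hsub : Aset ∩ Gset ⊆ Dset y e := by
      rintro ω ⟨⟨t, hte, hty⟩, _, hc, _⟩
      exact D_of_hit he hc t hte hty
    have : P ξ Aset ≤ P ξ (Dset y e) + P ξ {ω : CPath | ¬ (ω 0 = ξ ∧ Continuous ω ∧ ∀ t, ω t ∈ Set.Ioo a b)} := by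
      refine le_trans (measure_mono ?_) (measure_union_le _ _)
      intro ω hω
      by_cases hG : ω ∈ Gset
      · exact Or.inl (hsub ⟨hω, hG⟩)
      · exact Or.inr hG
    rw [hGnull, add_zero] at this
    exact lt_of_lt_of_le hkpos this
  · -- kstar = n+1 : no hit before time kstar * e
    set T : ℝ≥0 := ((kstar:ℝ≥0)) * e with hT
    set N : Set CPath := {ω | ∃ t, t ≤ T ∧ ω t = y} with hN
    have hNnull : P ξ N = 0 := by
      have hNsub : N ⊆ ⋃ k : ℕ, W (min k (kstar - 1)) := by
        rintro ω ⟨t, htT, hty⟩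
        set k := min ⌊(t / e : ℝ≥0)⌋₊ (kstar - 1) with hk
        refine Set.mem_iUnion.2 ⟨⌊(t / e : ℝ≥0)⌋₊, ?_⟩
        have hke : (k : ℝ≥0) * e ≤ t := by
          rcases min_cases ⌊(t / e : ℝ≥0)⌋₊ (kstar - 1) with ⟨hmin, _⟩ | ⟨hmin, hle⟩
          · rw [hk, hmin]
            have h1 := Nat.floor_le (zero_le : (0:ℝ≥0) ≤ t / e)
            calc (⌊(t / e : ℝ≥0)⌋₊ : ℝ≥0) * e ≤ t / e * e := by gcongr
              _ = t := div_mul_cancel₀ _ hene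
          · rw [hk, hmin]
            have h1 : ((kstar - 1 : ℕ) : ℝ≥0) ≤ t / e := le_trans (by exact_mod_cast le_of_lt hle) (Nat.floor_le (zero_le : (0:ℝ≥0) ≤ t / e))
            calc ((kstar - 1 : ℕ) : ℝ≥0) * e ≤ t / e * e := by gcongr
              _ = t := div_mul_cancel₀ _ hene
        have hte : t - (k : ℝ≥0) * e ≤ e := by
          rcases min_cases ⌊(t / e : ℝ≥0)⌋₊ (kstar - 1) with ⟨hmin, _⟩ | ⟨hmin, _⟩
          · rw [hk, hmin]
            have h1 := le_of_lt (Nat.lt_floor_add_one (t / e))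
            refine tsub_le_iff_left.2 ?_
            calc t = t / e * e := (div_mul_cancel₀ _ hene).symm
              _ ≤ ((⌊(t / e : ℝ≥0)⌋₊ : ℝ≥0) + 1) * e := by gcongr
              _ = (⌊(t / e : ℝ≥0)⌋₊ : ℝ≥0) * e + e := by ring
          · rw [hk, hmin]
            refine tsub_le_iff_left.2 ?_
            have hks : ((kstar - 1 : ℕ) : ℝ≥0) + 1 = (kstar : ℝ≥0) := by
              have := Nat.succ_pred_eq_of_pos hkpos'
              exact_mod_cast congrArg (Nat.cast (R := ℝ≥0)) this
            calc t ≤ T := htT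
              _ = (kstar : ℝ≥0) * e := rfl
              _ = ((kstar - 1:ℕ) : ℝ≥0) * e + e := by rw [← hks]; ring
        refine ⟨t - (k:ℝ≥0)*e, hte, ?_⟩
        show shift (((⌊(t / e : ℝ≥0)⌋₊ ⊓ (kstar - 1) : ℕ):ℝ≥0) * e) ω (t - (k:ℝ≥0)*e) = y
        rw [shift_apply]
        have hkk : ((⌊(t / e : ℝ≥0)⌋₊ ⊓ (kstar - 1) : ℕ):ℝ≥0) * e = (k:ℝ≥0)*e := by rw [hk]
        rw [hkk, add_tsub_cancel_of_le hke, hty]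
      have h1 := le_trans (measure_mono hNsub) (measure_iUnion_le (μ := P ξ) _)
      have h2 : ∀ k : ℕ, P ξ (W (min k (kstar - 1))) = 0 := fun k =>
        hkmin _ (lt_of_le_of_lt (min_le_right _ _) (Nat.pred_lt (Nat.pos_iff_ne_zero.1 hkpos')))
      rw [ENNReal.tsum_eq_zero.2 h2] at h1
      exact le_antisymm h1 zero_le
    -- the window event, intersected with the good set, lands in B ∩ shift⁻¹ D
    set B : Set CPath := {ω | ω T ∈ Set.Ioo a y} with hB
    have hsub : W kstar ∩ Gset ∩ Nᶜ ⊆ B ∩ (fun ω => shift T ω) ⁻¹' (Dset y e) := by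
      rintro ω ⟨⟨hWω, h0, hc, hst⟩, hNc⟩
      have hTy : ω T < y := by
        rcases lt_trichotomy (ω T) y with h | h | h
        · exact h
        · exact absurd ⟨T, le_refl T, h⟩ hNc
        · exfalso
          have hIcc : y ∈ Set.Icc (ω 0) (ω T) := ⟨by rw [h0]; exact le_of_lt hξy, le_of_lt h⟩
          obtain ⟨t, htmem, hty⟩ := intermediate_value_Icc (zero_le : (0:ℝ≥0) ≤ T) hc.continuousOn hIcc
          exact hNc ⟨t, htmem.2, hty⟩
      refine ⟨⟨(hst T).1, hTy⟩, ?_⟩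
      obtain ⟨t', ht'e, ht'y⟩ := hWω
      exact D_of_hit he (continuous_shift hc T) t' ht'e ht'y
    have hCpos : 0 < P ξ (B ∩ (fun ω => shift T ω) ⁻¹' (Dset y e)) := by
      have hsplit : P ξ (W kstar) ≤ P ξ (B ∩ (fun ω => shift T ω) ⁻¹' (Dset y e))
          + (P ξ {ω : CPath | ¬ (ω 0 = ξ ∧ Continuous ω ∧ ∀ t, ω t ∈ Set.Ioo a b)} + P ξ N) := by
        refine le_trans (measure_mono ?_) (le_trans (measure_union_le _ _)
          (add_le_add le_rfl (measure_union_le _ _)))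
        intro ω hω
        by_cases hG : ω ∈ Gset
        · by_cases hNm : ω ∈ N
          · exact Or.inr (Or.inr hNm)
          · exact Or.inl (hsub ⟨⟨hω, hG⟩, hNm⟩)
        · exact Or.inr (Or.inl hG)
      rw [hGnull, hNnull, add_zero, add_zero] at hsplit
      exact lt_of_lt_of_le hkpos hsplit
    -- strong Markov at the constant time T
    have hBmeas : MeasurableSet[(isStoppingTime_const canonicalFiltration T).measurableSpace] B := by
      rw [IsStoppingTime.measurableSpace_const]
      exact mem_filtration (le_refl T) measurableSet_Ioo
    have hsm := hX.strongMarkov ξ (fun _ => T) (isStoppingTime_const canonicalFiltration T)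
      (Dset y e) (measurableSet_Dset y e) B hBmeas
    rw [hsm] at hCpos
    obtain ⟨ω₀, hω₀B, hω₀pos⟩ := exists_pos_of_setLIntegral_pos
      ((measurable_pi_apply T) measurableSet_Ioo) hCpos
    exact ⟨ω₀ T, hω₀B.1, hω₀B.2, hω₀pos⟩

end HitsFast
end
end Aux5
theorem hits_fast_stmt18 (a b : ℝ) (hab : a < b) (P : ℝ → Measure CPath)
    (hX : IsRegularDiffusion (Set.Ioo a b) P)
    (hlm : ∀ x ∈ Set.Ioo a b, IsLocalMart canonicalFiltration (P x) (fun t ω => ω t))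
    (ξ : ℝ) (hξ : ξ ∈ Set.Ioo a b) :
    ∀ y ∈ Set.Ioo a b, ξ < y → ∀ ε : ℝ, 0 < ε →
      ∃ w ∈ Set.Ioo ξ y, 0 < P w {ω : CPath | ∃ t : ℝ≥0, (t : ℝ) ≤ ε ∧ ω t = y} := by
  intro y hy hξy ε hε
  set e : ℝ≥0 := ε.toNNReal with hedef
  have he : 0 < e := Real.toNNReal_pos.2 hε
  have hreg := hX.regular ξ hξ y hy
  obtain ⟨z, hza, hzy, hzpos⟩ := HitsFast.localize a b ξ y P hX hξ hy hξy e he hreg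
  obtain ⟨w, hw, hwpos⟩ := HitsFast.crossing a b ξ y P hX hξ hy hξy e he z hza hzy hzpos
  refine ⟨w, hw, ?_⟩
  have hwab : w ∈ Set.Ioo a b := ⟨lt_trans hξ.1 hw.1, lt_trans hw.2 hy.2⟩
  have hGae : ∀ᵐ ω ∂(P w), ω 0 = w ∧ Continuous ω :=
    (hX.start w hwab).and (hX.cont w hwab)
  have hGnull : P w {ω : CPath | ¬ (ω 0 = w ∧ Continuous ω)} = 0 := MeasureTheory.ae_iff.mp hGae
  have hsub : HitsFast.Dset y e ∩ {ω : CPath | ω 0 = w ∧ Continuous ω}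
      ⊆ {ω : CPath | ∃ t : ℝ≥0, (t : ℝ) ≤ ε ∧ ω t = y} := by
    rintro ω ⟨hD, h0, hc⟩
    obtain ⟨t, hte, hty⟩ := HitsFast.hit_of_D hc (by rw [h0]; exact hw.2) hD
    refine ⟨t, ?_, hty⟩
    have h1 : (t:ℝ) ≤ (e:ℝ) := NNReal.coe_le_coe.2 hte
    rwa [hedef, Real.coe_toNNReal ε (le_of_lt hε)] at h1
  have hle : P w (HitsFast.Dset y e) ≤ P w {ω : CPath | ∃ t : ℝ≥0, (t : ℝ) ≤ ε ∧ ω t = y}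
      + P w {ω : CPath | ¬ (ω 0 = w ∧ Continuous ω)} := by
    refine le_trans (MeasureTheory.measure_mono ?_) (MeasureTheory.measure_union_le _ _)
    intro ω hω
    by_cases hG : ω ∈ {ω : CPath | ω 0 = w ∧ Continuous ω}
    · exact Or.inl (hsub ⟨hω, hG⟩)
    · exact Or.inr hG
  rw [hGnull, add_zero] at hle
  exact lt_of_lt_of_le hwpos hle
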